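/- Let n ≥ 2 and let G be a linear influence game with n players, weights w_{ji} and thresholds b_i. Define a 2-action polymatrix game on the same n players by setting, for each ordered pair of distinct players j, i, the partial payoff α_{ji}(x_j, x_i) = x_i·w_{ji}·x_j − x_i·b_i/(n−1). Then a joint action x ∈ {−1,1}^n is a pure-strategy Nash equilibrium of this polymatrix game if and only if it is a pure-strategy Nash equilibrium of G. -/

import Mathlib

/-!
Summed over the `n - 1` opponents of player `i`, the partial payoffs
`xᵢ wⱼᵢ xⱼ - xᵢ bᵢ / (n - 1)` add up to `xᵢ (∑ⱼ wⱼᵢ xⱼ - bᵢ)`, so player `i`'s polymatrix payoff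
is linear in its own action `a`: it equals `a · (∑ⱼ wⱼᵢ xⱼ - bᵢ)`, exactly the LIG payoff. Hence
`M_i(xᵢ) ≥ M_i(-xᵢ)` reads `-u_i(x) ≤ u_i(x)`, i.e. `u_i(x) ≥ 0`.
-/

open Finset

theorem card_filter_ne_eq_card_sub_one {α : Type*} [Fintype α] [DecidableEq α] (i : α) :
    #(univ.filter (· ≠ i)) = Fintype.card α - 1 := by
  rw [filter_ne', card_erase_of_mem (mem_univ i), card_univ]

section

variable {ι : Type*} {s : Finset ι}

theorem sum_sub_div_card (hs : s.Nonempty) (f : ι → ℝ) (c : ℝ) :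
    ∑ j ∈ s, (f j - c / #s) = ∑ j ∈ s, f j - c := by
  have hcard : (#s : ℝ) ≠ 0 := Nat.cast_ne_zero.mpr hs.card_pos.ne'
  rw [sum_sub_distrib, sum_const, nsmul_eq_mul, mul_div_cancel₀ c hcard]

theorem sum_mul_mul_sub_mul_div_card (hs : s.Nonempty) (a c : ℝ) (w y : ι → ℝ) :
    ∑ j ∈ s, (a * w j * y j - a * c / #s) = a * (∑ j ∈ s, w j * y j - c) := by
  rw [sum_sub_div_card hs, mul_sub, mul_sum]
  simp only [mul_assoc]

end

theorem lig_to_polymatrix_same_psne (n : ℕ) (hn : 2 ≤ n)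
    (w : Fin n → Fin n → ℝ) (b : Fin n → ℝ)
    (x : Fin n → ℝ) :
    (∀ i : Fin n,
        (∑ j ∈ univ.filter (· ≠ i), (x i * w j i * x j - x i * b i / ((n : ℝ) - 1))) ≥
          ∑ j ∈ univ.filter (· ≠ i), ((-x i) * w j i * x j - (-x i) * b i / ((n : ℝ) - 1)))
      ↔
    (∀ i : Fin n, x i * ((∑ j ∈ univ.filter (· ≠ i), w j i * x j) - b i) ≥ 0) := by
  refine forall_congr' fun i => ?_
  have hcard : #(univ.filter (· ≠ i)) = n - 1 := by
    rw [card_filter_ne_eq_card_sub_one, Fintype.card_fin]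
  have hopponents : (univ.filter (· ≠ i)).Nonempty := card_pos.mp (by omega)
  have hcardR : ((#(univ.filter (· ≠ i)) : ℕ) : ℝ) = (n : ℝ) - 1 := by
    rw [hcard, Nat.cast_sub (by omega), Nat.cast_one]
  rw [← hcardR, sum_mul_mul_sub_mul_div_card hopponents, sum_mul_mul_sub_mul_div_card hopponents,
    ge_iff_le, neg_mul, neg_le_self_iff, ge_iff_le]
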